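/- Let 0 < α < 1 and define ω_k = 2^α((2k+1)^{−α} − (2k−1)^{−α}) for integers k ≥ 1. Then for every k ≥ 1, ω_k < ω_{k+1} < 0, and there is a constant C > 0 such that for every k ≥ 1, |ω_k + α/k^{1+α}| ≤ C / k^{2+α}. -/

import Mathlib

/-!
With `f x = x ^ (-α)` we have `ω_k = 2^α (f (2k+1) - f (2k-1))`. Since `f` is strictly convex and
decreasing on `(0, ∞)`, secant slopes over the consecutive intervals `[2k-1, 2k+1]` increase and
are negative, which gives `ω_k < ω_{k+1} < 0`. For the asymptotics, `α / k^(1+α) = -2^α · 2 f'(2k)`,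
and the central difference `f (m+1) - f (m-1) - 2 f' m` is controlled by the mean value theorem
applied to `f x - f' m · x`, whose derivative `f' x - f' m` is `O((m-1)^(-α-2))` on `[m-1, m+1]`.
-/

/-- Interior weights `ω_k` of the midpoint-based approximation. -/
noncomputable def wk (α : ℝ) (k : ℕ) : ℝ :=
  (2:ℝ) ^ α * ((2 * (k:ℝ) + 1) ^ (-α) - (2 * (k:ℝ) - 1) ^ (-α))

open Set Real

theorem strictConvexOn_rpow_of_neg {r : ℝ} (hr : r < 0) :
    StrictConvexOn ℝ (Ioi 0) fun x : ℝ ↦ x ^ r := by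
  refine StrictMonoOn.strictConvexOn_of_deriv (convex_Ioi 0)
    (fun x hx ↦ (continuousAt_rpow_const x r (.inl hx.ne')).continuousWithinAt) ?_
  rw [interior_Ioi]
  intro x hx y _ hxy
  simp only [Real.deriv_rpow_const]
  exact mul_lt_mul_of_neg_left (rpow_lt_rpow_of_neg hx hxy (by linarith)) hr

theorem abs_rpow_sub_rpow_le_of_nonpos {r a x y : ℝ} (hr : r ≤ 0) (ha : 0 < a) (hx : a ≤ x)
    (hy : a ≤ y) : |x ^ r - y ^ r| ≤ -r * a ^ (r - 1) * |x - y| := by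
  refine (convex_Ici a).norm_image_sub_le_of_norm_hasDerivWithin_le
    (f := fun t : ℝ ↦ t ^ r) (fun t ht ↦ (hasDerivAt_rpow_const
      (.inl (ha.trans_le ht).ne')).hasDerivWithinAt) (fun t ht ↦ ?_) hy hx
  have ht : a ≤ t := ht
  rw [norm_mul, Real.norm_eq_abs, Real.norm_eq_abs, abs_of_nonpos hr,
    abs_of_pos (rpow_pos_of_pos (ha.trans_le ht) _)]
  exact mul_le_mul_of_nonneg_left (rpow_le_rpow_of_nonpos ha ht (by linarith)) (by linarith)

theorem abs_sub_sub_mul_le_of_abs_deriv_sub_le {f f' : ℝ → ℝ} {s : Set ℝ} {φ L x y : ℝ}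
    (hs : Convex ℝ s) (hf : ∀ t ∈ s, HasDerivWithinAt f (f' t) s t)
    (hL : ∀ t ∈ s, |f' t - φ| ≤ L) (hx : x ∈ s) (hy : y ∈ s) :
    |f y - f x - φ * (y - x)| ≤ L * |y - x| := by
  have := hs.norm_image_sub_le_of_norm_hasDerivWithin_le (f := fun t ↦ f t - φ * t)
    (fun t ht ↦ (hf t ht).sub ((hasDerivWithinAt_id t s).const_mul φ)) (by simpa using hL) hx hy
  simp only [Real.norm_eq_abs] at this
  convert this using 2
  ring

theorem abs_rpow_central_difference_le {r m h : ℝ} (hr : r ≤ 0) (hh : 0 ≤ h) (hm : h < m) :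
    |(m + h) ^ r - (m - h) ^ r - 2 * h * (r * m ^ (r - 1))| ≤
      2 * h ^ 2 * (r * (r - 1)) * (m - h) ^ (r - 2) := by
  have hmh : 0 < m - h := by linarith
  have key := abs_sub_sub_mul_le_of_abs_deriv_sub_le (convex_Icc (m - h) (m + h))
    (f := fun t ↦ t ^ r) (f' := fun t ↦ r * t ^ (r - 1)) (φ := r * m ^ (r - 1))
    (L := h * (r * (r - 1)) * (m - h) ^ (r - 2))
    (fun t ht ↦ (hasDerivAt_rpow_const (.inl (hmh.trans_le ht.1).ne')).hasDerivWithinAt)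
    (fun t ht ↦ ?_) (left_mem_Icc.2 (by linarith)) (right_mem_Icc.2 (by linarith))
  · rw [show m + h - (m - h) = 2 * h by ring, abs_of_nonneg (by linarith : (0 : ℝ) ≤ 2 * h)]
      at key
    convert key using 1 <;> ring_nf
  · have hdiff : |t ^ (r - 1) - m ^ (r - 1)| ≤ (1 - r) * (m - h) ^ (r - 2) * |t - m| := by
      convert abs_rpow_sub_rpow_le_of_nonpos (r := r - 1) (by linarith) hmh ht.1
        (show m - h ≤ m by linarith) using 3 <;> ring_nf
    have htm : |t - m| ≤ h := abs_le.2 ⟨by linarith [ht.1], by linarith [ht.2]⟩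
    calc |r * t ^ (r - 1) - r * m ^ (r - 1)| = -r * |t ^ (r - 1) - m ^ (r - 1)| := by
          rw [← mul_sub, abs_mul, abs_of_nonpos hr]
      _ ≤ -r * ((1 - r) * (m - h) ^ (r - 2) * h) := by
          gcongr
          · linarith
          · exact hdiff.trans (mul_le_mul_of_nonneg_left htm
              (mul_nonneg (by linarith) (rpow_nonneg hmh.le _)))
      _ = h * (r * (r - 1)) * (m - h) ^ (r - 2) := by ring

theorem wk_succ (α : ℝ) (k : ℕ) :
    wk α (k + 1) = 2 ^ α * ((2 * (k : ℝ) + 3) ^ (-α) - (2 * (k : ℝ) + 1) ^ (-α)) := by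
  simp only [wk]
  push_cast
  ring_nf

theorem wk_neg {α : ℝ} (hα : 0 < α) {k : ℕ} (hk : 1 ≤ k) : wk α k < 0 := by
  have hk' : (1 : ℝ) ≤ k := by exact_mod_cast hk
  have : (2 * (k : ℝ) + 1) ^ (-α) < (2 * (k : ℝ) - 1) ^ (-α) :=
    rpow_lt_rpow_of_neg (by linarith) (by linarith) (by linarith)
  exact mul_neg_of_pos_of_neg (by positivity) (by linarith)

theorem wk_lt_wk_succ {α : ℝ} (hα : 0 < α) {k : ℕ} (hk : 1 ≤ k) : wk α k < wk α (k + 1) := by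
  have hk' : (1 : ℝ) ≤ k := by exact_mod_cast hk
  have hslope := (strictConvexOn_rpow_of_neg (neg_lt_zero.2 hα)).slope_strict_mono_adjacent
    (x := 2 * k - 1) (y := 2 * k + 1) (z := 2 * k + 3)
    (show (0 : ℝ) < 2 * k - 1 by linarith) (show (0 : ℝ) < 2 * k + 3 by linarith)
    (by linarith) (by linarith)
  rw [show 2 * (k : ℝ) + 1 - (2 * k - 1) = 2 by ring,
    show 2 * (k : ℝ) + 3 - (2 * k + 1) = 2 by ring, div_lt_div_iff_of_pos_right two_pos] at hslope
  rw [wk, wk_succ]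
  gcongr

theorem wk_add_div_rpow_eq (α : ℝ) {k : ℕ} (hk : 0 < k) :
    wk α k + α / (k : ℝ) ^ (1 + α) = 2 ^ α * ((2 * (k : ℝ) + 1) ^ (-α) -
      (2 * (k : ℝ) - 1) ^ (-α) - 2 * (-α * (2 * (k : ℝ)) ^ (-α - 1))) := by
  have hk' : (0 : ℝ) < k := by exact_mod_cast hk
  have h2 : (2 : ℝ) ^ α * 2 ^ (-α - 1) = 2⁻¹ := by
    rw [← rpow_add two_pos, show α + (-α - 1) = -1 by ring, rpow_neg_one]
  rw [mul_rpow zero_le_two hk'.le, div_eq_mul_inv, ← rpow_neg hk'.le, wk]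
  rw [show -(1 + α) = -α - 1 by ring]
  linear_combination -2 * α * (k : ℝ) ^ (-α - 1) * h2

theorem abs_wk_add_div_rpow_le {α : ℝ} (hα : 0 < α) {k : ℕ} (hk : 1 ≤ k) :
    |wk α k + α / (k : ℝ) ^ (1 + α)| ≤ 2 ^ α * (2 * (α * (α + 1))) / (k : ℝ) ^ (2 + α) := by
  have hk' : (1 : ℝ) ≤ k := by exact_mod_cast hk
  have hcentral := abs_rpow_central_difference_le (r := -α) (m := 2 * k) (h := 1) (by linarith)
    zero_le_one (by linarith)
  simp only [mul_one, one_pow] at hcentral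
  have hdecay : (2 * (k : ℝ) - 1) ^ (-α - 2) ≤ (k : ℝ) ^ (-α - 2) :=
    rpow_le_rpow_of_nonpos (by linarith) (by linarith) (by linarith)
  rw [wk_add_div_rpow_eq α hk, abs_mul, abs_of_pos (by positivity), mul_div_assoc,
    div_eq_mul_inv, ← rpow_neg (by linarith), show -(2 + α) = -α - 2 by ring]
  gcongr
  calc _ ≤ 2 * (-α * (-α - 1)) * (2 * (k : ℝ) - 1) ^ (-α - 2) := hcentral
    _ ≤ 2 * (-α * (-α - 1)) * (k : ℝ) ^ (-α - 2) := by gcongr; nlinarith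
    _ = _ := by ring

theorem stmt17_general (α : ℝ) (hα0 : 0 < α) :
    (∀ k : ℕ, 1 ≤ k → wk α k < wk α (k + 1) ∧ wk α (k + 1) < 0) ∧
    ∃ C > 0, ∀ k : ℕ, 1 ≤ k →
      |wk α k + α / (k:ℝ) ^ (1 + α)| ≤ C / (k:ℝ) ^ (2 + α) :=
  ⟨fun _ hk ↦ ⟨wk_lt_wk_succ hα0 hk, wk_neg hα0 (by omega)⟩,
    _, by positivity, fun _ hk ↦ abs_wk_add_div_rpow_le hα0 hk⟩

theorem stmt17 (α : ℝ) (hα0 : 0 < α) (hα1 : α < 1) :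
    (∀ k : ℕ, 1 ≤ k → wk α k < wk α (k + 1) ∧ wk α (k + 1) < 0) ∧
    ∃ C > 0, ∀ k : ℕ, 1 ≤ k →
      |wk α k + α / (k:ℝ) ^ (1 + α)| ≤ C / (k:ℝ) ^ (2 + α) :=
  stmt17_general α hα0
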